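/- arXiv:2411.06646 — 2 statements merged into one kernel-verified Lean document; each statement's English description precedes it below -/
import Mathlib

section
/- Excess risk bound from uniform regression error under the margin condition: Let (x, y) be a random couple taking values in X × {0,1} for a measurable space X, with joint distribution P, marginal P_x, regression function eta(x) = P(y = 1 | x), Bayes rule f*(x) = 1{eta(x) ≥ 1/2}, and misclassification risk R(g) = P(y ≠ g(x)). Assume the margin condition: there exist c_M > 0 and gamma ≥ 0 such that P_x( 0 < |eta(x) − 1/2| ≤ t ) ≤ c_M·t^gamma for all t > 0. If eta_theta : X → R is measurable with sup_{x in X} |eta_theta(x) − eta(x)| ≤ epsilon for some epsilon > 0, then the plug-in rule f_theta(x) = 1{eta_theta(x) ≥ 1/2} satisfies R(f_theta) − R(f*) ≤ 2·c_M·epsilon^{1+gamma}. -/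
open MeasureTheory Real
open scoped Classical

noncomputable section

variable {X : Type*} [MeasurableSpace X]

/-- The misclassification risk `R(g) = P(y ≠ g(x))` of a binary classifier
`g : X → Bool` with respect to a joint distribution `P` on `X × {0,1}`. -/
def misclassRisk (P : Measure (X × Bool)) (g : X → Bool) : ℝ :=
  (P {p : X × Bool | p.2 ≠ g p.1}).toReal

/-- The plug-in classifier `x ↦ 1{η(x) ≥ 1/2}` of a function `η : X → ℝ`. -/
def plugIn (η : X → ℝ) : X → Bool :=
  fun x => if 1 / 2 ≤ η x then true else false

/-- `η` is the regression function `η(x) = P(y = 1 | x)` of the joint distribution `P`: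
for every measurable `A ⊆ X`, `P(A × {1}) = ∫_A η dP_x` where `P_x` is the marginal. -/
def IsRegressionFunction (P : Measure (X × Bool)) (η : X → ℝ) : Prop :=
  Measurable η ∧ (∀ x, 0 ≤ η x) ∧ (∀ x, η x ≤ 1) ∧
    ∀ A : Set X, MeasurableSet A →
      (P (A ×ˢ ({true} : Set Bool))).toReal = ∫ x in A, η x ∂P.fst



lemma setOf_snd_ne_plugIn {Y : Type*} (f : Y → ℝ) :
    {p : Y × Bool | p.2 ≠ plugIn f p.1} =
      {x | 1 / 2 ≤ f x} ×ˢ {false} ∪ {x | 1 / 2 ≤ f x}ᶜ ×ˢ {true} := by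
  ext ⟨x, b⟩
  cases b <;> simp [plugIn]

namespace IsRegressionFunction

variable {P : Measure (X × Bool)} {η : X → ℝ}

lemma integrable [IsFiniteMeasure P] (hη : IsRegressionFunction P η) :
    Integrable η P.fst := by
  obtain ⟨hmeas, h0, h1, -⟩ := hη
  refine Integrable.of_bound hmeas.aestronglyMeasurable 1 (ae_of_all _ fun x => ?_)
  rw [Real.norm_eq_abs, abs_le]
  exact ⟨by linarith [h0 x], h1 x⟩

lemma measureReal_prod_false [IsFiniteMeasure P] (hη : IsRegressionFunction P η)
    {A : Set X} (hA : MeasurableSet A) :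
    P.real (A ×ˢ {false}) = P.fst.real A - ∫ x in A, η x ∂P.fst := by
  have hsplit : A ×ˢ Set.univ = A ×ˢ {false} ∪ A ×ˢ ({true} : Set Bool) := by
    ext ⟨x, b⟩
    cases b <;> simp
  have hdisj : Disjoint (A ×ˢ {false}) (A ×ˢ ({true} : Set Bool)) :=
    Set.disjoint_prod.2 (Or.inr (by simp))
  rw [← hη.2.2.2 A hA]
  simp only [measureReal_def]
  rw [Measure.fst_apply hA, ← Set.prod_univ, hsplit,
    measure_union hdisj (hA.prod (measurableSet_singleton _)),
    ENNReal.toReal_add (measure_ne_top _ _) (measure_ne_top _ _)]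
  ring

lemma misclassRisk_plugIn [IsFiniteMeasure P] (hη : IsRegressionFunction P η)
    {f : X → ℝ} (hf : Measurable f) :
    misclassRisk P (plugIn f) =
      ∫ x, {x | 1 / 2 ≤ f x}.indicator (fun x => 1 - 2 * η x) x ∂P.fst
        + ∫ x, η x ∂P.fst := by
  set A := {x | 1 / 2 ≤ f x}
  have hA : MeasurableSet A := measurableSet_le measurable_const hf
  have hdisj : Disjoint (A ×ˢ {false}) (Aᶜ ×ˢ ({true} : Set Bool)) :=
    Set.disjoint_prod.2 (Or.inl disjoint_compl_right)
  have hcompl := integral_add_compl hA hη.integrable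
  rw [misclassRisk, setOf_snd_ne_plugIn,
    measure_union hdisj (hA.compl.prod (measurableSet_singleton _)),
    ENNReal.toReal_add (measure_ne_top _ _) (measure_ne_top _ _), ← measureReal_def,
    hη.measureReal_prod_false hA, hη.2.2.2 Aᶜ hA.compl, integral_indicator hA,
    integral_sub (integrable_const _) (hη.integrable.const_mul 2).integrableOn,
    setIntegral_const, integral_const_mul, smul_eq_mul, mul_one]
  linarith

end IsRegressionFunction

/-- The two decisions differ only when `1/2` lies between `a` and `b`, and then
`|a - 1/2| ≤ |b - a| ≤ ε` while the loss is `|1 - 2a| = 2|a - 1/2|`. -/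
lemma plugIn_excess_loss_le {a b ε : ℝ} (hab : |b - a| ≤ ε) :
    (if 1 / 2 ≤ b then 1 - 2 * a else 0) - (if 1 / 2 ≤ a then 1 - 2 * a else 0) ≤
      if 0 < |a - 1 / 2| ∧ |a - 1 / 2| ≤ ε then 2 * ε else 0 := by
  rw [abs_le] at hab
  simp only [abs_pos, sub_ne_zero, abs_le]
  grind

theorem plugin_excess_risk_uniform_bound_general
    (P : Measure (X × Bool)) [IsProbabilityMeasure P]
    (η : X → ℝ) (hη : IsRegressionFunction P η)
    (cM γ : ℝ)
    (hmargin : ∀ t : ℝ, 0 < t →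
      (P.fst {x | 0 < |η x - 1 / 2| ∧ |η x - 1 / 2| ≤ t}).toReal ≤ cM * t ^ γ)
    (ηθ : X → ℝ) (hηθ : Measurable ηθ)
    (ε : ℝ) (hε : 0 < ε) (hunif : ∀ x, |ηθ x - η x| ≤ ε) :
    misclassRisk P (plugIn ηθ) - misclassRisk P (plugIn η) ≤ 2 * cM * ε ^ (1 + γ) := by
  set S := {x | 0 < |η x - 1 / 2| ∧ |η x - 1 / 2| ≤ ε}
  have hS : MeasurableSet S :=
    (measurableSet_lt measurable_const (hη.1.sub measurable_const).abs).inter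
      (measurableSet_le (hη.1.sub measurable_const).abs measurable_const)
  have hint (f : X → ℝ) (hf : Measurable f) :
      Integrable ({x | 1 / 2 ≤ f x}.indicator fun x => 1 - 2 * η x) P.fst :=
    ((integrable_const 1).sub (hη.integrable.const_mul 2)).indicator
      (measurableSet_le measurable_const hf)
  calc misclassRisk P (plugIn ηθ) - misclassRisk P (plugIn η)
      = ∫ x, ({x | 1 / 2 ≤ ηθ x}.indicator (fun x => 1 - 2 * η x) x
          - {x | 1 / 2 ≤ η x}.indicator (fun x => 1 - 2 * η x) x) ∂P.fst := by
        rw [hη.misclassRisk_plugIn hηθ, hη.misclassRisk_plugIn hη.1,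
          integral_sub (hint ηθ hηθ) (hint η hη.1)]
        ring
    _ ≤ ∫ x, S.indicator (fun _ => 2 * ε) x ∂P.fst :=
        integral_mono ((hint ηθ hηθ).sub (hint η hη.1)) ((integrable_const _).indicator hS)
          fun x => by simpa only [Set.indicator_apply, Set.mem_ofPred_eq, S]
            using plugIn_excess_loss_le (hunif x)
    _ = 2 * ε * (P.fst S).toReal := by
        rw [integral_indicator_const _ hS, smul_eq_mul, mul_comm, measureReal_def]
    _ ≤ 2 * ε * (cM * ε ^ γ) := by gcongr; exact hmargin ε hε
    _ = 2 * cM * ε ^ (1 + γ) := by rw [rpow_add hε, rpow_one]; ring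

/-- **Excess risk bound from uniform regression error under the margin condition**: if
`P_x(0 < |η - 1/2| ≤ t) ≤ c_M t^γ` for all `t > 0` and `sup_x |η_θ(x) - η(x)| ≤ ε`, then
the plug-in rule `f_θ = 1{η_θ ≥ 1/2}` satisfies `R(f_θ) - R(f*) ≤ 2 c_M ε^{1+γ}`. -/
theorem plugin_excess_risk_uniform_bound
    (P : Measure (X × Bool)) [IsProbabilityMeasure P]
    (η : X → ℝ) (hη : IsRegressionFunction P η)
    (cM γ : ℝ) (hcM : 0 < cM) (hγ : 0 ≤ γ)
    (hmargin : ∀ t : ℝ, 0 < t →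
      (P.fst {x | 0 < |η x - 1 / 2| ∧ |η x - 1 / 2| ≤ t}).toReal ≤ cM * t ^ γ)
    (ηθ : X → ℝ) (hηθ : Measurable ηθ)
    (ε : ℝ) (hε : 0 < ε) (hunif : ∀ x, |ηθ x - η x| ≤ ε) :
    misclassRisk P (plugIn ηθ) - misclassRisk P (plugIn η) ≤ 2 * cM * ε ^ (1 + γ) :=
  plugin_excess_risk_uniform_bound_general P η hη cM γ hmargin ηθ hηθ ε hε hunif
end
end

section
/- Weight-perturbation stability of a single attention head: Let d, l ≥ 1 be integers and M, kappa ≥ 1, eta > 0. Let A_1 and A_2 be ReLU attention heads with parameter matrices Q_1, K_1, V_1 and Q_2, K_2, V_2 in R^{d×d}, respectively, all of whose entries are bounded in absolute value by kappa, and such that ||Q_1 − Q_2||_∞ ≤ eta, ||K_1 − K_2||_∞ ≤ eta, ||V_1 − V_2||_∞ ≤ eta. Then for every H in R^{d×l} with ||H||_∞ ≤ M, ||A_1(H) − A_2(H)||_∞ ≤ 3·kappa^3·d^6·M^3·l·eta. -/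
/-!
Each entry of `A(H)` is a sum of `l` terms `σ(⟨Q hᵢ, K hⱼ⟩) (V hⱼ)ₐ`. The entries of `Q h`, `K h`,
`V h` are at most `dκM` and move by at most `dηM` when the weights are perturbed, so the score
`⟨Q hᵢ, K hⱼ⟩` is at most `d(dκM)²` and moves by at most `2d(dκM)(dηM)`. As `σ` is 1-Lipschitz,
`x₁y₁ - x₂y₂ = (x₁ - x₂) y₁ + x₂ (y₁ - y₂)` bounds each term by `3d⁴κ²M³η`, and the claimed bound
is weaker by the factor `κd² ≥ 1`.
-/

open Matrix Finset Real MeasureTheory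

noncomputable section

/-- The ReLU activation function. -/
def relu (t : ℝ) : ℝ := max 0 t

/-- A ReLU attention head with query, key and value matrices `Q K V`, acting on an
embedding matrix `H ∈ ℝ^{de × l}`:  the `i`-th column of `A(H)` is
`∑ j σ(⟨Q h_i, K h_j⟩) V h_j`. -/
def attnHead {de l : ℕ} (Q K V : Matrix (Fin de) (Fin de) ℝ)
    (H : Matrix (Fin de) (Fin l) ℝ) : Matrix (Fin de) (Fin l) ℝ :=
  Matrix.of fun a i => ∑ j : Fin l,
    relu (∑ b : Fin de, Q.mulVec (fun c => H c i) b * K.mulVec (fun c => H c j) b) *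
      V.mulVec (fun c => H c j) a

/-- Multi-headed attention layer with `m` heads. -/
def mha {de l : ℕ} (m : ℕ) (Q K V : ℕ → Matrix (Fin de) (Fin de) ℝ)
    (H : Matrix (Fin de) (Fin l) ℝ) : Matrix (Fin de) (Fin l) ℝ :=
  ∑ j ∈ Finset.range m, attnHead (Q j) (K j) (V j) H

lemma abs_sum_le_card_mul {ι : Type*} [Fintype ι] (f : ι → ℝ) {c : ℝ} (hf : ∀ i, |f i| ≤ c) :
    |∑ i, f i| ≤ Fintype.card ι * c := by
  calc |∑ i, f i| ≤ ∑ i, |f i| := abs_sum_le_sum_abs _ _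
    _ ≤ Fintype.card ι • c := sum_le_card_nsmul _ _ _ fun i _ => hf i
    _ = Fintype.card ι * c := nsmul_eq_mul _ _

lemma abs_mul_sub_mul_le {x₁ x₂ y₁ y₂ δ ε a b : ℝ} (hx : |x₁ - x₂| ≤ δ) (hy₁ : |y₁| ≤ b)
    (hx₂ : |x₂| ≤ a) (hy : |y₁ - y₂| ≤ ε) :
    |x₁ * y₁ - x₂ * y₂| ≤ δ * b + a * ε := by
  have hδ : 0 ≤ δ := (abs_nonneg _).trans hx
  have ha : 0 ≤ a := (abs_nonneg _).trans hx₂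
  calc |x₁ * y₁ - x₂ * y₂| = |(x₁ - x₂) * y₁ + x₂ * (y₁ - y₂)| := by congr 1; ring
    _ ≤ |x₁ - x₂| * |y₁| + |x₂| * |y₁ - y₂| := by
      rw [← abs_mul, ← abs_mul]; exact abs_add_le _ _
    _ ≤ δ * b + a * ε := by gcongr

section DotProduct

variable {n : Type*} [Fintype n]

lemma abs_dotProduct_le {v w : n → ℝ} {a b : ℝ} (hv : ∀ i, |v i| ≤ a) (hw : ∀ i, |w i| ≤ b) :
    |v ⬝ᵥ w| ≤ Fintype.card n * (a * b) :=
  abs_sum_le_card_mul _ fun i => by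
    rw [abs_mul]; exact mul_le_mul (hv i) (hw i) (abs_nonneg _) ((abs_nonneg _).trans (hv i))

lemma abs_mulVec_le {A : Matrix n n ℝ} {v : n → ℝ} {a b : ℝ} (hA : ∀ i j, |A i j| ≤ a)
    (hv : ∀ j, |v j| ≤ b) (i : n) :
    |(A *ᵥ v) i| ≤ Fintype.card n * (a * b) :=
  abs_dotProduct_le (hA i) hv

lemma abs_sub_mulVec_le {A₁ A₂ : Matrix n n ℝ} {v : n → ℝ} {ε b : ℝ}
    (hA : ∀ i j, |A₁ i j - A₂ i j| ≤ ε) (hv : ∀ j, |v j| ≤ b) (i : n) :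
    |(A₁ *ᵥ v) i - (A₂ *ᵥ v) i| ≤ Fintype.card n * (ε * b) := by
  rw [← Pi.sub_apply, ← sub_mulVec]
  exact abs_mulVec_le hA hv i

lemma abs_dotProduct_sub_dotProduct_le {v₁ v₂ w₁ w₂ : n → ℝ} {δ ε a b : ℝ}
    (hv : ∀ i, |v₁ i - v₂ i| ≤ δ) (hw₁ : ∀ i, |w₁ i| ≤ b) (hv₂ : ∀ i, |v₂ i| ≤ a)
    (hw : ∀ i, |w₁ i - w₂ i| ≤ ε) :
    |v₁ ⬝ᵥ w₁ - v₂ ⬝ᵥ w₂| ≤ Fintype.card n * (δ * b + a * ε) := by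
  rw [dotProduct, dotProduct, ← sum_sub_distrib]
  exact abs_sum_le_card_mul _ fun i => abs_mul_sub_mul_le (hv i) (hw₁ i) (hv₂ i) (hw i)

end DotProduct

lemma abs_relu_sub_relu_le (x y : ℝ) : |relu x - relu y| ≤ |x - y| := by
  simpa only [relu, max_comm (0 : ℝ)] using abs_max_sub_max_le_abs x y 0

lemma abs_relu_le (x : ℝ) : |relu x| ≤ |x| := by
  simpa [relu] using abs_relu_sub_relu_le x 0

section AttentionTerm

variable {n : Type*} [Fintype n] {Q₁ K₁ V₁ Q₂ K₂ V₂ : Matrix n n ℝ} {x y : n → ℝ} {κ η M : ℝ}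

lemma abs_relu_dotProduct_mul_mulVec_sub_le (hK₁ : ∀ a b, |K₁ a b| ≤ κ) (hV₁ : ∀ a b, |V₁ a b| ≤ κ)
    (hQ₂ : ∀ a b, |Q₂ a b| ≤ κ) (hK₂ : ∀ a b, |K₂ a b| ≤ κ)
    (hdQ : ∀ a b, |Q₁ a b - Q₂ a b| ≤ η) (hdK : ∀ a b, |K₁ a b - K₂ a b| ≤ η)
    (hdV : ∀ a b, |V₁ a b - V₂ a b| ≤ η) (hx : ∀ c, |x c| ≤ M) (hy : ∀ c, |y c| ≤ M) (a : n) :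
    |relu ((Q₁ *ᵥ x) ⬝ᵥ (K₁ *ᵥ y)) * (V₁ *ᵥ y) a - relu ((Q₂ *ᵥ x) ⬝ᵥ (K₂ *ᵥ y)) * (V₂ *ᵥ y) a|
      ≤ 3 * (Fintype.card n : ℝ) ^ 4 * κ ^ 2 * M ^ 3 * η := by
  have hscore := abs_dotProduct_sub_dotProduct_le (abs_sub_mulVec_le hdQ hx)
    (abs_mulVec_le hK₁ hy) (abs_mulVec_le hQ₂ hx) (abs_sub_mulVec_le hdK hy)
  have hterm := abs_mul_sub_mul_le ((abs_relu_sub_relu_le _ _).trans hscore)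
    (abs_mulVec_le hV₁ hy a)
    ((abs_relu_le _).trans (abs_dotProduct_le (abs_mulVec_le hQ₂ hx) (abs_mulVec_le hK₂ hy)))
    (abs_sub_mulVec_le hdV hy a)
  exact hterm.trans_eq (by ring)

end AttentionTerm

lemma attnHead_apply {d l : ℕ} (Q K V : Matrix (Fin d) (Fin d) ℝ) (H : Matrix (Fin d) (Fin l) ℝ)
    (a : Fin d) (i : Fin l) :
    attnHead Q K V H a i = ∑ j, relu ((Q *ᵥ Hᵀ i) ⬝ᵥ (K *ᵥ Hᵀ j)) * (V *ᵥ Hᵀ j) a :=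
  rfl

lemma abs_attnHead_sub_attnHead_le {d l : ℕ} {Q₁ K₁ V₁ Q₂ K₂ V₂ : Matrix (Fin d) (Fin d) ℝ}
    {H : Matrix (Fin d) (Fin l) ℝ} {κ η M : ℝ}
    (hK₁ : ∀ a b, |K₁ a b| ≤ κ) (hV₁ : ∀ a b, |V₁ a b| ≤ κ)
    (hQ₂ : ∀ a b, |Q₂ a b| ≤ κ) (hK₂ : ∀ a b, |K₂ a b| ≤ κ)
    (hdQ : ∀ a b, |Q₁ a b - Q₂ a b| ≤ η) (hdK : ∀ a b, |K₁ a b - K₂ a b| ≤ η)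
    (hdV : ∀ a b, |V₁ a b - V₂ a b| ≤ η) (hH : ∀ a i, |H a i| ≤ M) (a : Fin d) (i : Fin l) :
    |attnHead Q₁ K₁ V₁ H a i - attnHead Q₂ K₂ V₂ H a i| ≤
      l * (3 * (d : ℝ) ^ 4 * κ ^ 2 * M ^ 3 * η) := by
  rw [attnHead_apply, attnHead_apply, ← sum_sub_distrib]
  refine (abs_sum_le_card_mul _ fun j => ?_).trans_eq (by rw [Fintype.card_fin])
  simpa only [Fintype.card_fin] using abs_relu_dotProduct_mul_mulVec_sub_le (x := Hᵀ i)
    (y := Hᵀ j) hK₁ hV₁ hQ₂ hK₂ hdQ hdK hdV (fun c => hH c i) (fun c => hH c j) a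

theorem attention_head_weight_stability_general
    (d l : ℕ) (hd : 1 ≤ d) (M κ η : ℝ)
    (hM : 1 ≤ M) (hκ : 1 ≤ κ) (hη : 0 < η)
    (Q₁ K₁ V₁ Q₂ K₂ V₂ : Matrix (Fin d) (Fin d) ℝ)
    (hK₁ : ∀ a b, |K₁ a b| ≤ κ) (hV₁ : ∀ a b, |V₁ a b| ≤ κ)
    (hQ₂ : ∀ a b, |Q₂ a b| ≤ κ) (hK₂ : ∀ a b, |K₂ a b| ≤ κ)
    (hdQ : ∀ a b, |Q₁ a b - Q₂ a b| ≤ η)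
    (hdK : ∀ a b, |K₁ a b - K₂ a b| ≤ η)
    (hdV : ∀ a b, |V₁ a b - V₂ a b| ≤ η)
    (H : Matrix (Fin d) (Fin l) ℝ) (hH : ∀ a i, |H a i| ≤ M) :
    ∀ a i, |attnHead Q₁ K₁ V₁ H a i - attnHead Q₂ K₂ V₂ H a i| ≤
      3 * κ ^ 3 * (d : ℝ) ^ 6 * M ^ 3 * l * η := by
  intro a i
  have hκd : κ ^ 2 * (d : ℝ) ^ 4 ≤ κ ^ 3 * (d : ℝ) ^ 6 := by
    have hd' : (1 : ℝ) ≤ d := Nat.one_le_cast.mpr hd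
    exact mul_le_mul (pow_le_pow_right₀ hκ (by norm_num)) (pow_le_pow_right₀ hd' (by norm_num))
      (by positivity) (by positivity)
  have hrest : 0 ≤ 3 * M ^ 3 * l * η := by
    have hM0 : 0 ≤ M := by linarith
    positivity
  calc |attnHead Q₁ K₁ V₁ H a i - attnHead Q₂ K₂ V₂ H a i|
      ≤ l * (3 * (d : ℝ) ^ 4 * κ ^ 2 * M ^ 3 * η) :=
        abs_attnHead_sub_attnHead_le hK₁ hV₁ hQ₂ hK₂ hdQ hdK hdV hH a i
    _ = κ ^ 2 * (d : ℝ) ^ 4 * (3 * M ^ 3 * l * η) := by ring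
    _ ≤ κ ^ 3 * (d : ℝ) ^ 6 * (3 * M ^ 3 * l * η) := mul_le_mul_of_nonneg_right hκd hrest
    _ = 3 * κ ^ 3 * (d : ℝ) ^ 6 * M ^ 3 * l * η := by ring

/-- Weight-perturbation stability of a single ReLU attention head. -/
theorem attention_head_weight_stability
    (d l : ℕ) (hd : 1 ≤ d) (hl : 1 ≤ l) (M κ η : ℝ)
    (hM : 1 ≤ M) (hκ : 1 ≤ κ) (hη : 0 < η)
    (Q₁ K₁ V₁ Q₂ K₂ V₂ : Matrix (Fin d) (Fin d) ℝ)
    (hQ₁ : ∀ a b, |Q₁ a b| ≤ κ) (hK₁ : ∀ a b, |K₁ a b| ≤ κ) (hV₁ : ∀ a b, |V₁ a b| ≤ κ)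
    (hQ₂ : ∀ a b, |Q₂ a b| ≤ κ) (hK₂ : ∀ a b, |K₂ a b| ≤ κ) (hV₂ : ∀ a b, |V₂ a b| ≤ κ)
    (hdQ : ∀ a b, |Q₁ a b - Q₂ a b| ≤ η)
    (hdK : ∀ a b, |K₁ a b - K₂ a b| ≤ η)
    (hdV : ∀ a b, |V₁ a b - V₂ a b| ≤ η)
    (H : Matrix (Fin d) (Fin l) ℝ) (hH : ∀ a i, |H a i| ≤ M) :
    ∀ a i, |attnHead Q₁ K₁ V₁ H a i - attnHead Q₂ K₂ V₂ H a i| ≤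
      3 * κ ^ 3 * (d : ℝ) ^ 6 * M ^ 3 * l * η :=
  attention_head_weight_stability_general d l hd M κ η hM hκ hη Q₁ K₁ V₁ Q₂ K₂ V₂ hK₁ hV₁ hQ₂ hK₂
    hdQ hdK hdV H hH

end
end
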